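/- The sparing number of the Grötzsch graph is 5. -/

import Mathlib

open Pointwise

/-- The induced set-label on unordered pairs: the sumset of the two vertex labels. -/
def edgeLabel {V : Type*} (f : V → Finset ℕ) : Sym2 V → Finset ℕ :=
  Sym2.lift ⟨fun u v => f u + f v, fun u v => add_comm (f u) (f v)⟩

/-- `f` is a weak integer additive set-indexer of `G`. -/
structure IsWeakIASI {V : Type*} (G : SimpleGraph V) (f : V → Finset ℕ) : Prop where
  nonempty : ∀ v, (f v).Nonempty
  injective : Function.Injective f
  edgeInjective : Set.InjOn (edgeLabel f) G.edgeSet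
  weak : ∀ u v, G.Adj u v → (edgeLabel f s(u, v)).card = max (f u).card (f v).card

/-- The number of mono-indexed edges of `G` under the labeling `f`. -/
noncomputable def monoEdgeCount {V : Type*} (G : SimpleGraph V) (f : V → Finset ℕ) : ℕ :=
  {e ∈ G.edgeSet | (edgeLabel f e).card = 1}.ncard

/-- The sparing number: the minimum number of mono-indexed edges over all weak IASIs. -/
noncomputable def sparingNumber {V : Type*} (G : SimpleGraph V) : ℕ :=
  sInf {n | ∃ f, IsWeakIASI G f ∧ monoEdgeCount G f = n}

/-- The Grötzsch graph, the Mycielskian of the 5-cycle: vertices `vᵢ` (`Sum.inl i`)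
forming a 5-cycle, vertices `wᵢ` (`Sum.inr (Sum.inl i)`) with `wᵢ` adjacent to the two
neighbours `vᵢ₊₁, vᵢ₋₁` of `vᵢ`, and a central vertex `z` (`Sum.inr (Sum.inr ())`)
adjacent to all the `wᵢ`. -/
def grotzschGraph : SimpleGraph (Fin 5 ⊕ Fin 5 ⊕ Unit) :=
  SimpleGraph.fromRel (fun a b =>
    match a, b with
    | Sum.inl i, Sum.inl j => j = i + 1
    | Sum.inl i, Sum.inr (Sum.inl j) => i = j + 1 ∨ i = j - 1
    | Sum.inr (Sum.inl _), Sum.inr (Sum.inr _) => True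
    | _, _ => False)

/-!
Cauchy–Davenport gives `|A + B| ≥ |A| + |B| - 1` for finite sets of naturals, so in a weak IASI
every edge has an endpoint with a singleton label, and an edge is mono-indexed exactly when both
of its endpoints are. The singleton-labelled vertices thus form a vertex cover, and the
mono-indexed edges are the edges inside it. In the Grötzsch graph every vertex cover spans at
least `5` edges: its complement is independent, and an independent set has degree sum at most
`15` (the five `wᵢ`), out of `20` edges. Labelling the `wᵢ` by two-element sets and all other
vertices by singletons realises this bound.
-/

open Finset

namespace Finset

variable {α : Type*}

theorem card_add_eq_one_iff [DecidableEq α] [Add α] [IsCancelAdd α] {s t : Finset α}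
    (hs : s.Nonempty) (ht : t.Nonempty) : #(s + t) = 1 ↔ #s = 1 ∧ #t = 1 := by
  refine ⟨fun h => ⟨?_, ?_⟩, fun ⟨hs1, ht1⟩ => ?_⟩
  · exact le_antisymm (h ▸ card_le_card_add_right ht) hs.card_pos
  · exact le_antisymm (h ▸ card_le_card_add_left hs) ht.card_pos
  · obtain ⟨a, rfl⟩ := card_eq_one.mp hs1
    rwa [card_singleton_add]

theorem card_add_eq_max_iff [LinearOrder α] [Add α] [IsCancelAdd α] [AddLeftMono α]
    [AddRightMono α] {s t : Finset α} (hs : s.Nonempty) (ht : t.Nonempty) :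
    #(s + t) = max #s #t ↔ #s = 1 ∨ #t = 1 := by
  refine ⟨fun h => ?_, ?_⟩
  · have hcd := cauchy_davenport_add_of_linearOrder_isCancelAdd hs ht
    have hs1 := hs.card_pos
    have ht1 := ht.card_pos
    rw [h, max_def] at hcd
    split_ifs at hcd <;> omega
  · rintro (h | h) <;> obtain ⟨a, rfl⟩ := card_eq_one.mp h
    · rw [card_singleton_add, card_singleton, max_eq_right ht.card_pos]
    · rw [card_add_singleton, card_singleton, max_eq_left hs.card_pos]

end Finset

theorem List.ncard_setOf_mem_and {α : Type*} {l : List α} (hl : l.Nodup) (p : α → Prop)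
    [DecidablePred p] : {x | x ∈ l ∧ p x}.ncard = l.countP (fun x => p x) := by
  classical
  have hset : {x | x ∈ l ∧ p x} = ↑(l.filter (fun x => p x)).toFinset := by
    ext x
    simp
  rw [hset, Set.ncard_coe_finset, List.toFinset_card_of_nodup (hl.filter _),
    List.countP_eq_length_filter]

section WeakIASI

variable {V : Type*} {G : SimpleGraph V} {f : V → Finset ℕ}

theorem edgeLabel_mk (f : V → Finset ℕ) (u v : V) : edgeLabel f s(u, v) = f u + f v := rfl

theorem IsWeakIASI.card_eq_one_or_card_eq_one (hf : IsWeakIASI G f) {u v : V}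
    (huv : G.Adj u v) : #(f u) = 1 ∨ #(f v) = 1 :=
  (card_add_eq_max_iff (hf.nonempty u) (hf.nonempty v)).mp (hf.weak u v huv)

theorem monoEdgeCount_eq_ncard (hf : ∀ v, (f v).Nonempty) :
    monoEdgeCount G f = {e ∈ G.edgeSet | ∀ v ∈ e, #(f v) = 1}.ncard := by
  have hmono : ∀ e : Sym2 V, #(edgeLabel f e) = 1 ↔ ∀ v ∈ e, #(f v) = 1 := by
    refine Sym2.ind fun u v => ?_
    simp only [edgeLabel_mk, card_add_eq_one_iff (hf u) (hf v), Sym2.mem_iff, forall_eq_or_imp,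
      forall_eq]
  simp only [monoEdgeCount, hmono]

theorem sparingNumber_eq {n : ℕ} (hmin : ∀ f, IsWeakIASI G f → n ≤ monoEdgeCount G f)
    (hf : IsWeakIASI G f) (hfn : monoEdgeCount G f = n) : sparingNumber G = n :=
  le_antisymm (Nat.sInf_le ⟨f, hf, hfn⟩) (le_csInf ⟨n, f, hf, hfn⟩ (by
    rintro _ ⟨g, hg, rfl⟩
    exact hmin g hg))

end WeakIASI

instance : DecidableRel grotzschGraph.Adj := fun a b => by
  unfold grotzschGraph SimpleGraph.fromRel
  rcases a with i | j | u <;> rcases b with i' | j' | u' <;> simp only <;> infer_instance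

def grotzschEdgePairs : List ((Fin 5 ⊕ Fin 5 ⊕ Unit) × (Fin 5 ⊕ Fin 5 ⊕ Unit)) :=
  [(.inl 0, .inl 1), (.inl 1, .inl 2), (.inl 2, .inl 3), (.inl 3, .inl 4), (.inl 4, .inl 0),
   (.inl 1, .inr (.inl 0)), (.inl 4, .inr (.inl 0)), (.inl 2, .inr (.inl 1)),
   (.inl 0, .inr (.inl 1)), (.inl 3, .inr (.inl 2)), (.inl 1, .inr (.inl 2)),
   (.inl 4, .inr (.inl 3)), (.inl 2, .inr (.inl 3)), (.inl 0, .inr (.inl 4)),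
   (.inl 3, .inr (.inl 4)),
   (.inr (.inl 0), .inr (.inr ())), (.inr (.inl 1), .inr (.inr ())),
   (.inr (.inl 2), .inr (.inr ())), (.inr (.inl 3), .inr (.inr ())),
   (.inr (.inl 4), .inr (.inr ()))]

def grotzschEdges : List (Sym2 (Fin 5 ⊕ Fin 5 ⊕ Unit)) :=
  grotzschEdgePairs.map fun p => s(p.1, p.2)

theorem nodup_grotzschEdges : grotzschEdges.Nodup := by decide

theorem grotzschGraph_edgeSet : grotzschGraph.edgeSet = {e | e ∈ grotzschEdges} :=
  Set.ext <| by decide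

theorem five_le_countP_grotzschEdgePairs (s : Fin 5 ⊕ Fin 5 ⊕ Unit → Bool)
    (hs : ∀ p ∈ grotzschEdgePairs, s p.1 || s p.2) :
    5 ≤ grotzschEdgePairs.countP (fun p => s p.1 && s p.2) := by
  revert s
  decide +kernel

theorem grotzschGraph_five_le_ncard_edges_inside_cover (p : Fin 5 ⊕ Fin 5 ⊕ Unit → Prop)
    (hp : ∀ u v, grotzschGraph.Adj u v → p u ∨ p v) :
    5 ≤ {e ∈ grotzschGraph.edgeSet | ∀ v ∈ e, p v}.ncard := by
  classical
  have hcover : ∀ x ∈ grotzschEdgePairs, decide (p x.1) || decide (p x.2) := by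
    intro x hx
    have hadj : s(x.1, x.2) ∈ grotzschGraph.edgeSet := by
      rw [grotzschGraph_edgeSet]
      exact List.mem_map_of_mem hx
    simpa using hp _ _ hadj
  rw [grotzschGraph_edgeSet, Set.sep_ofPred, List.ncard_setOf_mem_and nodup_grotzschEdges,
    grotzschEdges, List.countP_map]
  convert five_le_countP_grotzschEdgePairs (fun v => decide (p v)) hcover using 3
  simp only [Function.comp_apply, Sym2.mem_iff, forall_eq_or_imp, forall_eq, Bool.decide_and]

-- The `vᵢ`-labels are distinct powers of two below `50`, so every sumset determines its edge.
def grotzschLabel : Fin 5 ⊕ Fin 5 ⊕ Unit → Finset ℕ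
  | .inl i => {2 ^ (i : ℕ)}
  | .inr (.inl i) => {100 * (i : ℕ), 100 * (i : ℕ) + 50}
  | .inr (.inr _) => {0}

theorem grotzschLabel_nonempty (v : Fin 5 ⊕ Fin 5 ⊕ Unit) : (grotzschLabel v).Nonempty := by
  rcases v with i | i | _ <;> simp [grotzschLabel]

theorem grotzschLabel_card_eq_one_or_card_eq_one :
    ∀ u v, grotzschGraph.Adj u v → #(grotzschLabel u) = 1 ∨ #(grotzschLabel v) = 1 := by
  decide

theorem grotzschLabel_isWeakIASI : IsWeakIASI grotzschGraph grotzschLabel where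
  nonempty := grotzschLabel_nonempty
  injective := by decide
  edgeInjective := by
    rw [grotzschGraph_edgeSet]
    intro e he e' he'
    exact List.inj_on_of_nodup_map (by decide) he he'
  weak u v huv := by
    rw [edgeLabel_mk, card_add_eq_max_iff (grotzschLabel_nonempty u) (grotzschLabel_nonempty v)]
    exact grotzschLabel_card_eq_one_or_card_eq_one u v huv

theorem grotzschLabel_monoEdgeCount : monoEdgeCount grotzschGraph grotzschLabel = 5 := by
  rw [monoEdgeCount_eq_ncard grotzschLabel_nonempty, grotzschGraph_edgeSet,
    Set.sep_ofPred, List.ncard_setOf_mem_and nodup_grotzschEdges]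
  decide

/-- The sparing number of the Grötzsch graph is `5`. -/
theorem sparingNumber_grotzsch : sparingNumber grotzschGraph = 5 := by
  refine sparingNumber_eq (fun f hf => ?_) grotzschLabel_isWeakIASI grotzschLabel_monoEdgeCount
  rw [monoEdgeCount_eq_ncard hf.nonempty]
  exact grotzschGraph_five_le_ncard_edges_inside_cover _ fun u v huv =>
    hf.card_eq_one_or_card_eq_one huv
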